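/- arXiv:1607.05247 — 2 statements merged into one kernel-verified Lean document; each statement's English description precedes it below -/
import Mathlib

section
/- For every ω > 0 and every s < t, the integral ∫_s^t e^{ω(r−t)} (r−s)^{−1/2} dr is at most √8 / √ω. -/
/-!
Split the integral at `s + δ`. On `[s, s + δ]` the exponential factor is at most `1`, leaving
`∫ (r - s)^(-1/2) = 2√δ`; on `[s + δ, t]` the singular factor is at most `δ^(-1/2)`, leaving
`δ^(-1/2) ∫ e^{ω(r - t)} ≤ 1 / (√δ ω)`. The choice `δ = 1 / (2ω)` minimizes `2√δ + 1 / (√δ ω)`,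
and the minimum is `√8 / √ω`.
-/

open Real MeasureTheory intervalIntegral Set

theorem intervalIntegrable_sub_rpow {p : ℝ} (hp : -1 < p) (s a b : ℝ) :
    IntervalIntegrable (fun r => (r - s) ^ p) volume a b := by
  simpa using (intervalIntegrable_rpow' (a := a - s) (b := b - s) hp).comp_sub_right s

theorem integral_sub_rpow {p : ℝ} (hp : -1 < p) (s a : ℝ) :
    ∫ r in s..a, (r - s) ^ p = (a - s) ^ (p + 1) / (p + 1) := by
  rw [integral_comp_sub_right (fun x => x ^ p), integral_rpow (Or.inl hp), sub_self,
    zero_rpow (by linarith), sub_zero]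

theorem integral_exp_mul_sub_le {ω : ℝ} (hω : 0 < ω) (a t : ℝ) :
    ∫ r in a..t, exp (ω * (r - t)) ≤ 1 / ω := by
  rw [integral_comp_sub_right (fun x => exp (ω * x)), integral_comp_mul_left exp hω.ne',
    integral_exp, smul_eq_mul, sub_self, mul_zero, exp_zero, one_div]
  exact mul_le_of_le_one_right (by positivity) (by linarith [exp_pos (ω * (a - t))])

section

variable (ω s t : ℝ)

theorem intervalIntegrable_exp_mul_sub_rpow (a b : ℝ) :
    IntervalIntegrable (fun r => exp (ω * (r - t)) * (r - s) ^ (-(1:ℝ)/2)) volume a b :=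
  (intervalIntegrable_sub_rpow (by norm_num) s a b).continuousOn_mul (by fun_prop)

variable {ω s t}

theorem integral_exp_mul_sub_rpow_le_of_le (hω : 0 ≤ ω) {a : ℝ} (hsa : s ≤ a) (hat : a ≤ t) :
    ∫ r in s..a, exp (ω * (r - t)) * (r - s) ^ (-(1:ℝ)/2) ≤ 2 * √(a - s) := by
  calc ∫ r in s..a, exp (ω * (r - t)) * (r - s) ^ (-(1:ℝ)/2)
      ≤ ∫ r in s..a, (r - s) ^ (-(1:ℝ)/2) := by
        refine integral_mono_on hsa (intervalIntegrable_exp_mul_sub_rpow ω s t s a)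
          (intervalIntegrable_sub_rpow (by norm_num) s s a) fun r hr => ?_
        have hexp : exp (ω * (r - t)) ≤ 1 :=
          exp_le_one_iff.mpr (mul_nonpos_of_nonneg_of_nonpos hω (by linarith [hr.2]))
        exact mul_le_of_le_one_left (rpow_nonneg (by linarith [hr.1]) _) hexp
    _ = 2 * √(a - s) := by
        rw [integral_sub_rpow (by norm_num), sqrt_eq_rpow]
        norm_num
        ring

theorem integral_exp_mul_sub_rpow_le_of_add_le (hω : 0 < ω) {δ : ℝ} (hδ : 0 < δ)
    (hδt : s + δ ≤ t) :
    ∫ r in (s + δ)..t, exp (ω * (r - t)) * (r - s) ^ (-(1:ℝ)/2) ≤ 1 / (√δ * ω) := by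
  have hsing : δ ^ (-(1:ℝ)/2) = (√δ)⁻¹ := by
    rw [sqrt_eq_rpow, ← rpow_neg hδ.le]
    norm_num
  calc ∫ r in (s + δ)..t, exp (ω * (r - t)) * (r - s) ^ (-(1:ℝ)/2)
      ≤ ∫ r in (s + δ)..t, (√δ)⁻¹ * exp (ω * (r - t)) := by
        refine integral_mono_on hδt (intervalIntegrable_exp_mul_sub_rpow ω s t _ _)
          ((by fun_prop : Continuous _).intervalIntegrable _ _) fun r hr => ?_
        rw [mul_comm, ← hsing]
        exact mul_le_mul_of_nonneg_right
          (rpow_le_rpow_of_nonpos hδ (by linarith [hr.1]) (by norm_num)) (exp_nonneg _)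
    _ ≤ (√δ)⁻¹ * (1 / ω) := by
        rw [intervalIntegral.integral_const_mul]
        exact mul_le_mul_of_nonneg_left (integral_exp_mul_sub_le hω _ _) (by positivity)
    _ = 1 / (√δ * ω) := by ring

theorem integral_exp_mul_sub_rpow_le (hω : 0 < ω) (hst : s ≤ t) {δ : ℝ} (hδ : 0 < δ) :
    ∫ r in s..t, exp (ω * (r - t)) * (r - s) ^ (-(1:ℝ)/2) ≤ 2 * √δ + 1 / (√δ * ω) := by
  have htail : 0 < 1 / (√δ * ω) := by positivity
  rcases le_or_gt t (s + δ) with hshort | hlong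
  · have hsqrt : √(t - s) ≤ √δ := sqrt_le_sqrt (by linarith)
    linarith [integral_exp_mul_sub_rpow_le_of_le hω.le hst le_rfl]
  · rw [← integral_add_adjacent_intervals (intervalIntegrable_exp_mul_sub_rpow ω s t s (s + δ))
      (intervalIntegrable_exp_mul_sub_rpow ω s t (s + δ) t)]
    have hhead := integral_exp_mul_sub_rpow_le_of_le hω.le (le_add_of_nonneg_right hδ.le) hlong.le
    rw [add_sub_cancel_left] at hhead
    linarith [integral_exp_mul_sub_rpow_le_of_add_le hω hδ hlong.le]

end

theorem stmt2 (ω s t : ℝ) (hω : 0 < ω) (hst : s < t) :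
    ∫ r in s..t, Real.exp (ω * (r - t)) * (r - s) ^ (-(1:ℝ)/2)
      ≤ Real.sqrt 8 / Real.sqrt ω := by
  -- `δ = (√8 / (4√ω))² = 1 / (2ω)`, written so that `√δ` needs no further simplification.
  have hc : 0 < √8 / (4 * √ω) := by positivity
  have hbound := integral_exp_mul_sub_rpow_le hω hst.le (pow_pos hc 2)
  rw [sqrt_sq hc.le] at hbound
  refine hbound.trans_eq ?_
  have h8 : √8 ^ 2 = 8 := sq_sqrt (by norm_num)
  have hsω : √ω ^ 2 = ω := sq_sqrt hω.le
  have hsqrtω : 0 < √ω := sqrt_pos.mpr hω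
  field_simp
  rw [h8, hsω]
  ring
end

section
/- Let β ∈ [0,1), δ > 0, C > 0 and let h : (s, s+δ] → [0, ∞) be measurable, with h(t) ≤ M (t−s)^{−1/2} for some M > 0 and all t, and satisfying h(t) ≤ C ∫_s^t (r−s)^{−β} h(r) dr for all t ∈ (s, s+δ]. Then h(t) = 0 for all t ∈ (s, s+δ]. -/
/-! Writing `k r = (r - s) ^ (-β)`, the inequality `h t ≤ C ∫_a^t k h` forces `h = 0` on `(a, b]`
as soon as `C ∫_a^b k ≤ 1/2`: with `G = ∫_a^b k h` one gets `h ≤ C G` on `(a, b]`, hence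
`G ≤ (C ∫_a^b k) G ≤ G / 2`. Since `k` is decreasing, `∫_a^{a+η} k ≤ η ^ (1 - β) / (1 - β)`, so a
single step length `η` works everywhere, and `h` vanishes on `(s, s + n η]` by induction on `n`. -/

open MeasureTheory Set

theorem eq_zero_of_le_mul_setIntegral_Ioc {k h : ℝ → ℝ} {a t C : ℝ} (hat : a < t) (hC : 0 ≤ C)
    (hk : ∀ r ∈ Ioc a t, 0 ≤ k r) (hk_int : IntegrableOn k (Ioc a t))
    (hsmall : C * ∫ r in Ioc a t, k r ≤ 1 / 2) (hnn : ∀ r ∈ Ioc a t, 0 ≤ h r)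
    (hle : ∀ r ∈ Ioc a t, h r ≤ C * ∫ x in Ioc a r, k x * h x) :
    h t = 0 := by
  have hkh : ∀ r ∈ Ioc a t, 0 ≤ k r * h r := fun r hr => mul_nonneg (hk r hr) (hnn r hr)
  have hG : ∫ x in Ioc a t, k x * h x = 0 := by
    by_cases hi : IntegrableOn (fun x => k x * h x) (Ioc a t)
    · set G := ∫ x in Ioc a t, k x * h x
      have hG0 : 0 ≤ G := setIntegral_nonneg measurableSet_Ioc hkh
      have hbound : ∀ r ∈ Ioc a t, h r ≤ C * G := fun r hr =>
        (hle r hr).trans <| mul_le_mul_of_nonneg_left (setIntegral_mono_set hi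
          (ae_restrict_of_forall_mem measurableSet_Ioc hkh)
          (Ioc_subset_Ioc_right hr.2).eventuallyLE) hC
      have hGG : G ≤ (C * ∫ r in Ioc a t, k r) * G :=
        calc G ≤ ∫ r in Ioc a t, k r * (C * G) :=
              setIntegral_mono_on hi (hk_int.mul_const _) measurableSet_Ioc fun r hr =>
                mul_le_mul_of_nonneg_left (hbound r hr) (hk r hr)
          _ = (C * ∫ r in Ioc a t, k r) * G := by rw [integral_mul_const]; ring
      nlinarith
    · exact integral_undef hi
  refine le_antisymm ?_ (hnn t ⟨hat, le_rfl⟩)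
  simpa [hG] using hle t ⟨hat, le_rfl⟩

theorem integrableOn_sub_rpow_neg {s β : ℝ} (hβ : β < 1) (a t : ℝ) :
    IntegrableOn (fun x => (x - s) ^ (-β)) (Ioc a t) := by
  have h : IntervalIntegrable (fun x : ℝ => x ^ (-β)) volume (a - s) (t - s) :=
    intervalIntegral.intervalIntegrable_rpow' (by linarith)
  exact (h.comp_sub_right s).1.mono_set (by simp)

theorem setIntegral_Ioc_sub_rpow_neg_le {s a t β : ℝ} (hsa : s ≤ a) (hat : a ≤ t)
    (hβ0 : 0 ≤ β) (hβ1 : β < 1) :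
    ∫ x in Ioc a t, (x - s) ^ (-β) ≤ (t - a) ^ (1 - β) / (1 - β) := by
  rw [← intervalIntegral.integral_of_le hat,
    intervalIntegral.integral_comp_sub_right (fun x => x ^ (-β)),
    integral_rpow (Or.inl (by linarith)), neg_add_eq_sub]
  have hsub := Real.rpow_add_le_add_rpow (sub_nonneg.2 hsa) (sub_nonneg.2 hat)
    (p := 1 - β) (by linarith) (by linarith)
  rw [show a - s + (t - a) = t - s by ring] at hsub
  gcongr
  linarith

section Volterra

variable {s β C : ℝ} {h : ℝ → ℝ}

theorem eq_zero_of_le_integral_sub_rpow_mul {a t : ℝ} (hsa : s ≤ a) (hat : a < t)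
    (hβ0 : 0 ≤ β) (hβ1 : β < 1) (hC : 0 ≤ C)
    (hsmall : C * (t - a) ^ (1 - β) / (1 - β) ≤ 1 / 2)
    (hnn : ∀ r ∈ Ioc a t, 0 ≤ h r) (hzero : ∀ r ∈ Ioc s a, h r = 0)
    (hint : ∀ r ∈ Ioc a t, h r ≤ C * ∫ x in s..r, (x - s) ^ (-β) * h x) :
    h t = 0 := by
  refine eq_zero_of_le_mul_setIntegral_Ioc (k := fun x => (x - s) ^ (-β)) hat hC
    (fun r hr => Real.rpow_nonneg (by linarith [hr.1]) _) (integrableOn_sub_rpow_neg hβ1 a t)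
    ?_ hnn fun r hr => ?_
  · calc C * ∫ x in Ioc a t, (x - s) ^ (-β)
        ≤ C * ((t - a) ^ (1 - β) / (1 - β)) := mul_le_mul_of_nonneg_left
          (setIntegral_Ioc_sub_rpow_neg_le hsa hat.le hβ0 hβ1) hC
      _ ≤ 1 / 2 := by rwa [← mul_div_assoc]
  · have hr' := hint r hr
    rwa [intervalIntegral.integral_of_le (hsa.trans hr.1.le),
      setIntegral_eq_of_subset_of_forall_sdiff_eq_zero measurableSet_Ioc
        (Ioc_subset_Ioc_left hsa) fun x hx => ?_] at hr'
    have hxa : x ≤ a := not_lt.1 fun hax => hx.2 ⟨hax, hx.1.2⟩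
    simp [hzero x ⟨hx.1.1, hxa⟩]

theorem eq_zero_of_le_add_nat_mul {δ η : ℝ} (hβ0 : 0 ≤ β) (hβ1 : β < 1) (hC : 0 ≤ C)
    (hη : 0 < η) (hηsmall : C * η ^ (1 - β) / (1 - β) ≤ 1 / 2)
    (hnn : ∀ t ∈ Ioc s (s + δ), 0 ≤ h t)
    (hint : ∀ t ∈ Ioc s (s + δ), h t ≤ C * ∫ r in s..t, (r - s) ^ (-β) * h r) (n : ℕ) :
    ∀ t ∈ Ioc s (s + δ), t ≤ s + n * η → h t = 0 := by
  induction n with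
  | zero =>
    intro t ht htn
    simp only [Nat.cast_zero, zero_mul, add_zero] at htn
    exact absurd ht.1 htn.not_gt
  | succ n ih =>
    intro t ht htn
    rcases le_or_gt t (s + n * η) with hle | hlt
    · exact ih t ht hle
    have hsa : s ≤ s + n * η := le_add_of_nonneg_right (by positivity)
    have hsub : Ioc (s + n * η) t ⊆ Ioc s (s + δ) := Ioc_subset_Ioc hsa ht.2
    refine eq_zero_of_le_integral_sub_rpow_mul hsa hlt hβ0 hβ1 hC ?_
      (fun r hr => hnn r (hsub hr)) (fun r hr => ih r ⟨hr.1, hr.2.trans (hlt.le.trans ht.2)⟩ hr.2)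
      fun r hr => hint r (hsub hr)
    calc C * (t - (s + n * η)) ^ (1 - β) / (1 - β) ≤ C * η ^ (1 - β) / (1 - β) := by
          have : t - (s + n * η) ≤ η := by push_cast at htn; linarith
          gcongr
      _ ≤ 1 / 2 := hηsmall

end Volterra

theorem stmt17_general (s δ β C : ℝ) (hβ0 : 0 ≤ β) (hβ1 : β < 1)
    (hC : 0 < C) (h : ℝ → ℝ)
    (hnn : ∀ t ∈ Set.Ioc s (s + δ), 0 ≤ h t)
    (hint : ∀ t ∈ Set.Ioc s (s + δ), h t ≤ C * ∫ r in s..t, (r - s) ^ (-β) * h r) :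
    ∀ t ∈ Set.Ioc s (s + δ), h t = 0 := by
  have h1β : 0 < 1 - β := by linarith
  set η := ((1 - β) / (2 * C)) ^ (1 - β)⁻¹
  have hη : 0 < η := by positivity
  have hηsmall : C * η ^ (1 - β) / (1 - β) ≤ 1 / 2 := by
    rw [Real.rpow_inv_rpow (by positivity) h1β.ne']
    exact le_of_eq (by field_simp)
  obtain ⟨n, hn⟩ := exists_nat_ge (δ / η)
  intro t ht
  refine eq_zero_of_le_add_nat_mul hβ0 hβ1 hC.le hη hηsmall hnn hint n t ht ?_
  linarith [ht.2, (div_le_iff₀ hη).1 hn]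

theorem stmt17 (s δ β C M : ℝ) (hδ : 0 < δ) (hβ0 : 0 ≤ β) (hβ1 : β < 1)
    (hC : 0 < C) (hM : 0 < M) (h : ℝ → ℝ) (hmeas : Measurable h)
    (hnn : ∀ t ∈ Set.Ioc s (s + δ), 0 ≤ h t)
    (hbd : ∀ t ∈ Set.Ioc s (s + δ), h t ≤ M * (t - s) ^ (-(1:ℝ)/2))
    (hint : ∀ t ∈ Set.Ioc s (s + δ), h t ≤ C * ∫ r in s..t, (r - s) ^ (-β) * h r) :
    ∀ t ∈ Set.Ioc s (s + δ), h t = 0 :=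
  stmt17_general s δ β C hβ0 hβ1 hC h hnn hint
end
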